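/- Let V ∈ ℝ^{M×K} have orthonormal columns, with K ≤ M, and let f > 1. Then there exists a selection matrix S ∈ ℝ^{M×K} choosing K distinct rows of V such that Sᵀ V is nonsingular and ‖(Sᵀ V)^{-1}‖₂ ≤ √(1 + f² K (M − K)). -/

import Mathlib

noncomputable section
open Matrix BigOperators Kronecker

/-- The selection matrix whose `j`-th column is the standard basis vector `e_{s j}`. -/
def selectionMatrix {M K : ℕ} (s : Fin K → Fin M) : Matrix (Fin M) (Fin K) ℝ :=
  Matrix.of fun i j => if s j = i then 1 else 0

/-- Restored from older Mathlib (removed upstream). -/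
theorem Matrix.isHermitian_transpose_mul_self {m n α : Type*} [CommSemiring α] [StarRing α]
    [TrivialStar α] [Fintype m] (A : Matrix m n α) : (Aᵀ * A).IsHermitian := by
  rw [← conjTranspose_eq_transpose_of_trivial]
  exact isHermitian_conjTranspose_mul_self A

/-- The singular values of a real matrix, arranged in decreasing order:
the nonnegative square roots of the eigenvalues of `AᵀA`. -/
noncomputable def singularValues {N M : ℕ} (A : Matrix (Fin N) (Fin M) ℝ) : Fin M → ℝ :=
  fun j =>
    Real.sqrt ((Matrix.isHermitian_transpose_mul_self A).eigenvalues
      (Tuple.sort (fun i => -(Matrix.isHermitian_transpose_mul_self A).eigenvalues i) j))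

/-- The spectral norm (largest singular value) of a real matrix. -/
noncomputable def specNorm {n m : ℕ} (B : Matrix (Fin n) (Fin m) ℝ) : ℝ :=
  ⨆ j, singularValues B j

/-- `Ψ(B) = logdet(I + B Bᵀ)`. -/
noncomputable def Psi {n m : ℕ} (B : Matrix (Fin n) (Fin m) ℝ) : ℝ :=
  Real.log (1 + B * Bᵀ).det

/-- The expected information gain `φ_EIG` of the selection `s` for the matrix `A`:
`logdet(I_N + (AS)(AS)ᵀ)`. -/
noncomputable def phiEIG {N M K : ℕ} (A : Matrix (Fin N) (Fin M) ℝ) (s : Fin K → Fin M) : ℝ :=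
  Psi (A * selectionMatrix s)

/-! ### Auxiliary lemmas -/

lemma selection_transpose_mul {M K : ℕ} (s : Fin K → Fin M) (V : Matrix (Fin M) (Fin K) ℝ) :
    (selectionMatrix s)ᵀ * V = V.submatrix s id := by
  ext i j
  simp [Matrix.mul_apply, selectionMatrix]

lemma exists_det_ne_zero {M K : ℕ} (V : Matrix (Fin M) (Fin K) ℝ)
    (hV : Vᵀ * V = 1) : ∃ s : Fin K → Fin M, (V.submatrix s id).det ≠ 0 := by
  have hspan : Submodule.span ℝ (Set.range fun i : Fin M => V i) = ⊤ := by
    rw [Submodule.eq_top_iff']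
    intro y
    have hy : Vᵀ *ᵥ (V *ᵥ y) = y := by
      rw [Matrix.mulVec_mulVec, hV, Matrix.one_mulVec]
    have key : ∀ z : Fin M → ℝ, Vᵀ *ᵥ z = ∑ i, z i • V i := by
      intro z; funext j
      simp [Matrix.mulVec, dotProduct, Finset.sum_apply, mul_comm]
    have hrepr : y = ∑ i : Fin M, (V *ᵥ y) i • V i := by
      conv_lhs => rw [← hy, key]
    rw [hrepr]
    exact Submodule.sum_mem _ fun i _ =>
      Submodule.smul_mem _ _ (Submodule.subset_span (Set.mem_range_self i))
  obtain ⟨t, hts, htspan, hli⟩ := exists_linearIndependent ℝ (Set.range fun i : Fin M => V i)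
  rw [hspan] at htspan
  let b : Module.Basis t ℝ (Fin K → ℝ) := Module.Basis.mk hli (by rw [Subtype.range_coe, htspan])
  haveI : Fintype t := FiniteDimensional.fintypeBasisIndex b
  have hcard : Fintype.card t = K := by
    have h1 := Module.finrank_eq_card_basis b
    simpa using h1.symm
  let e : Fin K ≃ t := (Fintype.equivFinOfCardEq hcard).symm
  have hmem : ∀ j : Fin K, ((e j : Fin K → ℝ)) ∈ Set.range fun i : Fin M => V i :=
    fun j => hts (e j).2
  choose s₀ hs₀ using fun j => hmem j
  refine ⟨s₀, ?_⟩
  have hrows : LinearIndependent ℝ (fun j : Fin K => (V.submatrix s₀ id) j) := by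
    have : (fun j : Fin K => (V.submatrix s₀ id) j) = fun j => ((e j : Fin K → ℝ)) := by
      funext j; funext l
      rw [Matrix.submatrix_apply, id, ← hs₀ j]
    rw [this]
    exact hli.comp e e.injective
  have hu : IsUnit (V.submatrix s₀ id) := Matrix.linearIndependent_rows_iff_isUnit.mp hrows
  exact ((Matrix.isUnit_iff_isUnit_det _).mp hu).ne_zero

lemma eigenvalue_le_aux {K : ℕ} (B : Matrix (Fin K) (Fin K) ℝ) (c : ℝ)
    (h : ∀ x : Fin K → ℝ, x ⬝ᵥ ((Bᴴ * B) *ᵥ x) ≤ c * (x ⬝ᵥ x)) (i : Fin K) :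
    (Matrix.isHermitian_transpose_mul_self B).eigenvalues i ≤ c := by
  have hv := (Matrix.isHermitian_transpose_mul_self B).eigenvalues_eq i
  set v : Fin K → ℝ := ⇑((Matrix.isHermitian_transpose_mul_self B).eigenvectorBasis i) with hvdef
  have hstar : star v = v := by simp
  have hnorm1 : ‖(Matrix.isHermitian_transpose_mul_self B).eigenvectorBasis i‖ = 1 :=
    (Matrix.isHermitian_transpose_mul_self B).eigenvectorBasis.orthonormal.1 i
  have hsum : ∑ l, v l ^ 2 = 1 := by
    have h1 := EuclideanSpace.norm_eq ((Matrix.isHermitian_transpose_mul_self B).eigenvectorBasis i)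
    rw [hnorm1] at h1
    have h2 := h1.symm
    rw [Real.sqrt_eq_one] at h2
    simpa [Real.norm_eq_abs, sq_abs] using h2
  have hdot : v ⬝ᵥ v = 1 := by
    simpa [dotProduct, pow_two] using hsum
  calc (Matrix.isHermitian_transpose_mul_self B).eigenvalues i
      = v ⬝ᵥ ((Bᴴ * B) *ᵥ v) := by rw [hv]; simp [hstar]
    _ ≤ c * (v ⬝ᵥ v) := h v
    _ = c := by rw [hdot, mul_one]

lemma specNorm_le_aux {K : ℕ} (B : Matrix (Fin K) (Fin K) ℝ) (c : ℝ)
    (h : ∀ x : Fin K → ℝ, x ⬝ᵥ ((Bᴴ * B) *ᵥ x) ≤ c * (x ⬝ᵥ x)) :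
    specNorm B ≤ Real.sqrt c := by
  apply Real.iSup_le _ (Real.sqrt_nonneg c)
  intro j
  exact Real.sqrt_le_sqrt (eigenvalue_le_aux B c h _)

/-- sRRQR guarantee: for a matrix with orthonormal columns there is a selection of `K` rows
whose inverse has spectral norm at most `√(1 + f² K (M − K))`. -/
theorem srrqr_selection_exists {M K : ℕ} (hKM : K ≤ M) (V : Matrix (Fin M) (Fin K) ℝ)
    (hV : Vᵀ * V = 1) (f : ℝ) (hf : 1 < f) :
    ∃ s : Fin K → Fin M, Function.Injective s ∧
      IsUnit ((selectionMatrix s)ᵀ * V).det ∧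
      specNorm (((selectionMatrix s)ᵀ * V)⁻¹) ≤
        Real.sqrt (1 + f ^ 2 * K * ((M : ℝ) - K)) := by
  obtain ⟨s₀, h₀⟩ := exists_det_ne_zero V hV
  haveI : Nonempty (Fin K → Fin M) := ⟨s₀⟩
  obtain ⟨s, hmax⟩ := Finite.exists_max (fun s : Fin K → Fin M => |(V.submatrix s id).det|)
  have hdet : (V.submatrix s id).det ≠ 0 := by
    intro h0
    have h1 := hmax s₀
    rw [h0] at h1
    simp at h1
    exact h₀ h1
  set A : Matrix (Fin K) (Fin K) ℝ := V.submatrix s id with hAdef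
  have hsinj : Function.Injective s := by
    intro j j' hjj
    by_contra hne
    exact hdet (Matrix.det_zero_of_row_eq hne (funext fun l => by
      simp [hAdef, Matrix.submatrix_apply, hjj]))
  have hAunit : IsUnit A.det := isUnit_iff_ne_zero.mpr hdet
  set B : Matrix (Fin K) (Fin K) ℝ := A⁻¹ with hBdef
  have hBA : B * A = 1 := Matrix.nonsing_inv_mul A hAunit
  have hAB : A * B = 1 := Matrix.mul_nonsing_inv A hAunit
  set W : Matrix (Fin M) (Fin K) ℝ := V * B with hWdef
  have hWA : W * A = V := by rw [hWdef, Matrix.mul_assoc, hBA, Matrix.mul_one]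
  -- entry bound on W obtained from maximality of |det A|
  have hWentry : ∀ (i : Fin M) (j : Fin K), |W i j| ≤ 1 := by
    intro i j
    have h1 : V.submatrix (Function.update s j i) id = A.updateRow j (V i) := by
      ext k l
      by_cases hk : k = j <;>
        simp [Matrix.submatrix_apply, Matrix.updateRow_apply, Function.update_apply, hk, hAdef]
    have h2 : A.updateRow j (V i)
        = (Matrix.updateRow (1 : Matrix (Fin K) (Fin K) ℝ) j (W i)) * A := by
      ext k l
      by_cases hk : k = j
      · subst hk
        have h5 : ((Matrix.updateRow (1 : Matrix (Fin K) (Fin K) ℝ) k (W i)) * A) k l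
            = (W * A) i l := by
          simp [Matrix.mul_apply]
        rw [h5, hWA]
        simp
      · simp [Matrix.mul_apply, Matrix.updateRow_apply, hk, Matrix.one_apply, ite_mul]
    have h3 : (V.submatrix (Function.update s j i) id).det = W i j * A.det := by
      rw [h1, h2, Matrix.det_mul]
      congr 1
      have h := Matrix.cramer_transpose_apply (1 : Matrix (Fin K) (Fin K) ℝ) (W i) j
      rw [Matrix.transpose_one, Matrix.cramer_one] at h
      simpa using h.symm
    have h4 := hmax (Function.update s j i)
    rw [h3, abs_mul] at h4
    have hpos : 0 < |A.det| := abs_pos.mpr hdet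
    have h6 := (div_le_div_iff_of_pos_right hpos).mpr h4
    rw [mul_div_cancel_right₀ _ hpos.ne', div_self hpos.ne'] at h6
    exact h6
  -- selected rows of W form the identity
  have hWrow : ∀ (j l : Fin K), W (s j) l = (1 : Matrix (Fin K) (Fin K) ℝ) j l := by
    intro j l
    have h5 : W (s j) l = (A * B) j l := by
      simp [hWdef, Matrix.mul_apply, hAdef, Matrix.submatrix_apply]
    rw [h5, hAB]
  set c : ℝ := 1 + (K : ℝ) * ((M : ℝ) - K) with hcdef
  have hMK : (K : ℝ) ≤ (M : ℝ) := by exact_mod_cast hKM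
  have hKMnn : 0 ≤ (K : ℝ) * ((M : ℝ) - K) := by
    apply mul_nonneg (Nat.cast_nonneg K)
    linarith
  -- the quadratic form bound
  have hquad : ∀ x : Fin K → ℝ, x ⬝ᵥ ((Bᴴ * B) *ᵥ x) ≤ c * (x ⬝ᵥ x) := by
    intro x
    have hBH : Bᴴ = Bᵀ := Matrix.conjTranspose_eq_transpose_of_trivial B
    have hWtW : Wᵀ * W = Bᵀ * B := by
      rw [hWdef, Matrix.transpose_mul, Matrix.mul_assoc, ← Matrix.mul_assoc Vᵀ V B, hV,
        Matrix.one_mul]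
    have hrw : x ⬝ᵥ ((Bᴴ * B) *ᵥ x) = (W *ᵥ x) ⬝ᵥ (W *ᵥ x) := by
      rw [hBH, ← hWtW, ← Matrix.mulVec_mulVec, dotProduct_mulVec,
        Matrix.vecMul_transpose]
    rw [hrw]
    set y := W *ᵥ x with hydef
    have hy_sel : ∀ j : Fin K, y (s j) = x j := by
      intro j
      have h5 : y (s j) = ∑ l, W (s j) l * x l := rfl
      rw [h5]
      simp only [hWrow]
      simp [Matrix.one_apply, ite_mul]
    have hxx : 0 ≤ x ⬝ᵥ x := Finset.sum_nonneg fun l _ => mul_self_nonneg _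
    have hT : (Finset.image s Finset.univ).card = K := by
      rw [Finset.card_image_of_injective _ hsinj, Finset.card_univ, Fintype.card_fin]
    have hsplit : y ⬝ᵥ y = (∑ i ∈ Finset.image s Finset.univ, y i * y i)
        + ∑ i ∈ (Finset.image s Finset.univ)ᶜ, y i * y i := by
      rw [dotProduct]
      exact (Finset.sum_add_sum_compl _ _).symm
    have hsel : ∑ i ∈ Finset.image s Finset.univ, y i * y i = x ⬝ᵥ x := by
      rw [Finset.sum_image (fun a _ b _ h => hsinj h)]
      simp [hy_sel, dotProduct]
    have hterm : ∀ i, y i * y i ≤ (K : ℝ) * (x ⬝ᵥ x) := by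
      intro i
      have h1 : |y i| ≤ ∑ l, |x l| := by
        have h5 : y i = ∑ l, W i l * x l := rfl
        rw [h5]
        refine (Finset.abs_sum_le_sum_abs _ _).trans ?_
        refine Finset.sum_le_sum fun l _ => ?_
        rw [abs_mul]
        exact mul_le_of_le_one_left (abs_nonneg _) (hWentry i l)
      have h2 : (∑ l, |x l|) ^ 2 ≤ (K : ℝ) * (x ⬝ᵥ x) := by
        have h6 := Finset.sum_mul_sq_le_sq_mul_sq Finset.univ
          (fun _ : Fin K => (1 : ℝ)) fun l => |x l|
        simp only [one_mul, one_pow] at h6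
        have h7 : (∑ _l : Fin K, (1 : ℝ)) = (K : ℝ) := by simp
        have h8 : (∑ l, |x l| ^ 2) = x ⬝ᵥ x := by
          simp [dotProduct, sq_abs, pow_two]
        rw [h7, h8] at h6
        exact h6
      calc y i * y i = |y i| ^ 2 := by rw [sq_abs, pow_two]
        _ ≤ (∑ l, |x l|) ^ 2 := pow_le_pow_left₀ (abs_nonneg _) h1 2
        _ ≤ (K : ℝ) * (x ⬝ᵥ x) := h2
    have hcompl : ∑ i ∈ (Finset.image s Finset.univ)ᶜ, y i * y i
        ≤ ((M - K : ℕ) : ℝ) * ((K : ℝ) * (x ⬝ᵥ x)) := by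
      have hcard : ((Finset.image s Finset.univ)ᶜ : Finset (Fin M)).card = M - K := by
        rw [Finset.card_compl, hT, Fintype.card_fin]
      calc ∑ i ∈ (Finset.image s Finset.univ)ᶜ, y i * y i
          ≤ ((Finset.image s Finset.univ)ᶜ : Finset (Fin M)).card • ((K : ℝ) * (x ⬝ᵥ x)) :=
            Finset.sum_le_card_nsmul _ _ _ fun i _ => hterm i
        _ = ((M - K : ℕ) : ℝ) * ((K : ℝ) * (x ⬝ᵥ x)) := by rw [hcard, nsmul_eq_mul]
    have hcast : ((M - K : ℕ) : ℝ) = (M : ℝ) - K := by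
      rw [Nat.cast_sub hKM]
    rw [hcast] at hcompl
    have hring : ((M : ℝ) - K) * ((K : ℝ) * (x ⬝ᵥ x))
        = (K : ℝ) * ((M : ℝ) - K) * (x ⬝ᵥ x) := by ring
    rw [hsplit, hsel, hcdef]
    rw [hring] at hcompl
    nlinarith [hcompl]
  refine ⟨s, hsinj, ?_, ?_⟩
  · rw [selection_transpose_mul, ← hAdef]
    exact hAunit
  · rw [selection_transpose_mul, ← hAdef, ← hBdef]
    refine (specNorm_le_aux B c hquad).trans ?_
    apply Real.sqrt_le_sqrt
    rw [hcdef]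
    have h1 : (1 : ℝ) ≤ f ^ 2 := by nlinarith
    nlinarith [hKMnn]
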